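/- arXiv:1509.08451 — 2 statements merged into one kernel-verified Lean document; each statement's English description precedes it below -/
import Mathlib

section
/- Let x ∈ ℂ^N with all entries nonzero, written entrywise as x_n = b_n e^{jθ_n} with b_n > 0, let A ∈ ℂ^{N×M}, and define G ∈ ℝ^{2N×M} with top block Re(diag(e^{−jθ}) A diag(A^H x)) and bottom block Im(diag(x̄) A diag(A^H x)). Then the vector v = [0_N; 1_N] ∈ ℝ^{2N} satisfies G^T v = 0; equivalently v is in the null space of the Fisher information matrix F = (4/σ²) G G^T. -/
open Matrix

/-- The 2N×M matrix G with top block Re(diag(e^{−jθ}) A diag(Aᴴx)) and bottom block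
Im(diag(x̄) A diag(Aᴴx)). -/
noncomputable def Gphase {N M : ℕ} (x : Fin N → ℂ) (θ : Fin N → ℝ)
    (A : Matrix (Fin N) (Fin M) ℂ) : Matrix (Fin N ⊕ Fin N) (Fin M) ℝ :=
  Matrix.of fun p i =>
    Sum.elim
      (fun n => (Complex.exp (-(θ n : ℂ) * Complex.I) * A n i * (∑ k, star (A k i) * x k)).re)
      (fun n => (star (x n) * A n i * (∑ k, star (A k i) * x k)).im) p

/-- Summing over `n` factors out `∑ₙ x̄ₙ aₙ = conj (∑ₖ āₖ xₖ)`, leaving `Im |∑ₖ āₖ xₖ|² = 0`. -/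
theorem sum_im_star_mul_mul_sum_star_mul {ι : Type*} [Fintype ι] (x a : ι → ℂ) :
    ∑ n, (star (x n) * a n * ∑ k, star (a k) * x k).im = 0 := by
  have h_conj : ∑ n, star (x n) * a n = star (∑ k, star (a k) * x k) := by
    simp only [star_sum, star_mul', star_star, mul_comm]
  rw [← Complex.im_sum, ← Finset.sum_mul, h_conj, Complex.star_def, Complex.conj_mul']
  norm_cast

theorem transpose_mulVec_sumElim_zero_one {m n p R : Type*} [Fintype m] [Fintype n]
    [NonAssocSemiring R] (G : Matrix (m ⊕ n) p R) :
    Gᵀ *ᵥ Sum.elim (fun _ => 0) (fun _ => 1) = fun i => ∑ k, G (Sum.inr k) i := by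
  funext i
  simp [mulVec, dotProduct, Fintype.sum_sum_type]

theorem smul_mul_transpose_mulVec_eq_zero {m p R : Type*} [Fintype m] [Fintype p]
    [CommSemiring R] (c : R) (G : Matrix m p R) {v : m → R} (hv : Gᵀ *ᵥ v = 0) :
    (c • (G * Gᵀ)) *ᵥ v = 0 := by
  rw [smul_mulVec, ← mulVec_mulVec, hv, mulVec_zero, smul_zero]

theorem stmt_4_general (N M : ℕ) (x : Fin N → ℂ) (θ : Fin N → ℝ)
    (A : Matrix (Fin N) (Fin M) ℂ) (σ : ℝ) :
    (Gphase x θ A)ᵀ.mulVec (Sum.elim (fun _ => (0:ℝ)) (fun _ => (1:ℝ))) = 0 ∧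
    ((4/σ^2) • (Gphase x θ A * (Gphase x θ A)ᵀ)).mulVec
      (Sum.elim (fun _ => (0:ℝ)) (fun _ => (1:ℝ))) = 0 := by
  have h_null : (Gphase x θ A)ᵀ *ᵥ Sum.elim (fun _ => (0:ℝ)) (fun _ => (1:ℝ)) = 0 := by
    rw [transpose_mulVec_sumElim_zero_one]
    funext i
    exact sum_im_star_mul_mul_sum_star_mul x (fun n => A n i)
  exact ⟨h_null, smul_mul_transpose_mulVec_eq_zero _ _ h_null⟩

/-- the vector v = [0_N; 1_N] satisfies Gᵀv = 0, i.e. v is in the null space of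
the amplitude-phase Fisher information matrix F = (4/σ²) G Gᵀ. -/
theorem stmt_4 (N M : ℕ) (x : Fin N → ℂ) (b θ : Fin N → ℝ)
    (hb : ∀ n, 0 < b n)
    (hx : ∀ n, x n = (b n : ℂ) * Complex.exp ((θ n : ℂ) * Complex.I))
    (A : Matrix (Fin N) (Fin M) ℂ) (σ : ℝ) (hσ : 0 < σ) :
    (Gphase x θ A)ᵀ.mulVec (Sum.elim (fun _ => (0:ℝ)) (fun _ => (1:ℝ))) = 0 ∧
    ((4/σ^2) • (Gphase x θ A * (Gphase x θ A)ᵀ)).mulVec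
      (Sum.elim (fun _ => (0:ℝ)) (fun _ => (1:ℝ))) = 0 :=
  stmt_4_general N M x θ A σ
end

section
/- Let x ∈ ℂ^N, A ∈ ℂ^{N×M}, and define G_c ∈ ℝ^{2N×M} with top block Re(A diag(A^H x)) and bottom block Im(A diag(A^H x)). Then the vector v = [−Im(x); Re(x)] ∈ ℝ^{2N} satisfies G_c^T v = 0, hence v lies in the null space of F_c = (4/σ²) G_c G_c^T. -/
/-!
Column `i` of `G_c` is the realification of `aᵢ (aᵢᴴ x)`, and pairing the realification of a
complex vector `w` with that of `j x` gives `Im (xᴴ w)`. For `w = aᵢ (aᵢᴴ x)` this is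
`Im |aᵢᴴ x|² = 0`.
-/

open Matrix

/-- The 2N×M matrix G_c with top block Re(A diag(Aᴴx)) and bottom block Im(A diag(Aᴴx)). -/
noncomputable def Gc {N M : ℕ} (x : Fin N → ℂ)
    (A : Matrix (Fin N) (Fin M) ℂ) : Matrix (Fin N ⊕ Fin N) (Fin M) ℝ :=
  Matrix.of fun p i =>
    Sum.elim
      (fun n => (A n i * (∑ k, star (A k i) * x k)).re)
      (fun n => (A n i * (∑ k, star (A k i) * x k)).im) p

theorem sumElim_re_im_dotProduct_sumElim_neg_im_re {ι : Type*} [Fintype ι] (w z : ι → ℂ) :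
    Sum.elim (fun n => (w n).re) (fun n => (w n).im) ⬝ᵥ
        Sum.elim (fun n => -(z n).im) (fun n => (z n).re) =
      (star z ⬝ᵥ w).im := by
  simp only [dotProduct, Fintype.sum_sum_type, Sum.elim_inl, Sum.elim_inr, Complex.im_sum,
    ← Finset.sum_add_distrib, Pi.star_apply, Complex.star_def, Complex.mul_im,
    Complex.conj_re, Complex.conj_im]
  exact Finset.sum_congr rfl fun n _ => by ring

theorem star_dotProduct_mul_const {ι : Type*} [Fintype ι] (z a : ι → ℂ) (s : ℂ) :
    star z ⬝ᵥ (fun n => a n * s) = star (star a ⬝ᵥ z) * s := by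
  simp only [dotProduct, Pi.star_apply, star_sum, star_mul', star_star, Finset.sum_mul]
  exact Finset.sum_congr rfl fun n _ => by ring

theorem Gc_transpose_mulVec_rotate {N M : ℕ} (x : Fin N → ℂ) (A : Matrix (Fin N) (Fin M) ℂ) :
    (Gc x A)ᵀ *ᵥ Sum.elim (fun n => -(x n).im) (fun n => (x n).re) = 0 := by
  funext i
  set s : ℂ := ∑ k, star (A k i) * x k
  have hrow : (Gc x A)ᵀ i =
      Sum.elim (fun n => (A n i * s).re) (fun n => (A n i * s).im) := by
    funext p; cases p <;> rfl
  have hs : star (fun k => A k i) ⬝ᵥ x = s := rfl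
  rw [Pi.zero_apply, mulVec, hrow, sumElim_re_im_dotProduct_sumElim_neg_im_re,
    star_dotProduct_mul_const, hs, Complex.star_def, ← Complex.normSq_eq_conj_mul_self,
    Complex.ofReal_im]

theorem stmt_5_general (N M : ℕ) (x : Fin N → ℂ) (A : Matrix (Fin N) (Fin M) ℂ)
    (σ : ℝ) :
    (Gc x A)ᵀ.mulVec (Sum.elim (fun n => -(x n).im) (fun n => (x n).re)) = 0 ∧
    ((4/σ^2) • (Gc x A * (Gc x A)ᵀ)).mulVec
      (Sum.elim (fun n => -(x n).im) (fun n => (x n).re)) = 0 := by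
  have hnull := Gc_transpose_mulVec_rotate x A
  refine ⟨hnull, ?_⟩
  rw [smul_mulVec, ← mulVec_mulVec, hnull, mulVec_zero, smul_zero]

/-- v = [−Im(x); Re(x)] satisfies G_cᵀ v = 0, hence v lies in the null space of
F_c = (4/σ²) G_c G_cᵀ. -/
theorem stmt_5 (N M : ℕ) (x : Fin N → ℂ) (A : Matrix (Fin N) (Fin M) ℂ)
    (σ : ℝ) (hσ : 0 < σ) :
    (Gc x A)ᵀ.mulVec (Sum.elim (fun n => -(x n).im) (fun n => (x n).re)) = 0 ∧
    ((4/σ^2) • (Gc x A * (Gc x A)ᵀ)).mulVec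
      (Sum.elim (fun n => -(x n).im) (fun n => (x n).re)) = 0 :=
  stmt_5_general N M x A σ
end
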